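/- Let r ∈ ℕ₀, s ∈ ℕ, n ∈ ℕ, and A ∈ ℕ₀^{r×(r+s)} with all row sums at most n. Set b = ⌊n^{r/s}⌋. Then there exist two distinct vectors x, y ∈ {0,1,…,b}^{r+s} with A x = A y; consequently v = x − y is a non-zero integer kernel vector of A with ‖v‖_∞ ≤ b. -/

import Mathlib

/-!
Vectors in `{0, …, B}^(r+s)` number `(B + 1)^(r+s)`, while `A` maps each of them into
`{0, …, nB}^r`, a set of `(nB + 1)^r` elements. For `B = ⌊n^(r/s)⌋` we have `n^r < (B + 1)^s`,
hence `(nB + 1)^r ≤ (n(B + 1))^r < (B + 1)^(r+s)`, and the pigeonhole principle gives two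
distinct vectors with the same image; their difference is the kernel vector.
-/

open Finset Fintype

theorem exists_ne_forall_le_sum_mul_eq {κ ι : Type*} [Fintype κ] [Fintype ι]
    (A : κ → ι → ℕ) {n B : ℕ} (hrow : ∀ i, ∑ j, A i j ≤ n)
    (hcard : (n * B + 1) ^ card κ < (B + 1) ^ card ι) :
    ∃ x y : ι → ℕ, x ≠ y ∧ (∀ j, x j ≤ B) ∧ (∀ j, y j ≤ B) ∧
      ∀ i, ∑ j, A i j * x j = ∑ j, A i j * y j := by
  classical
  have hmaps : Set.MapsTo (fun x i => ∑ j, A i j * x j)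
      (piFinset fun _ : ι => range (B + 1) : Set (ι → ℕ))
      (piFinset fun _ : κ => range (n * B + 1)) := by
    intro x hx
    simp only [coe_piFinset, Set.mem_pi, Set.mem_univ, coe_range, Set.mem_Iio,
      forall_const, Nat.lt_succ_iff] at hx ⊢
    intro i
    calc ∑ j, A i j * x j ≤ ∑ j, A i j * B := sum_le_sum fun j _ => Nat.mul_le_mul_left _ (hx j)
      _ = (∑ j, A i j) * B := (sum_mul ..).symm
      _ ≤ n * B := Nat.mul_le_mul_right B (hrow i)
  obtain ⟨x, hx, y, hy, hne, heq⟩ :=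
    exists_ne_map_eq_of_card_lt_of_maps_to (by simpa using hcard) hmaps
  simp only [mem_piFinset, mem_range, Nat.lt_succ_iff] at hx hy
  exact ⟨x, y, hne, hx, hy, fun i => congrFun heq i⟩

theorem pow_lt_floor_rpow_div_add_one_pow {x : ℝ} (hx : 0 ≤ x) (r : ℕ) {s : ℕ} (hs : s ≠ 0) :
    x ^ r < ((⌊x ^ ((r : ℝ) / s)⌋₊ : ℝ) + 1) ^ s := by
  have hroot : x ^ r = (x ^ ((r : ℝ) / s)) ^ s := by
    rw [← Real.rpow_natCast _ s, ← Real.rpow_mul hx, div_mul_cancel₀ _ (by exact_mod_cast hs),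
      Real.rpow_natCast]
  rw [hroot]
  exact pow_lt_pow_left₀ (Nat.lt_floor_add_one _) (by positivity) hs

theorem mul_add_one_pow_lt_add_one_pow_add {n B r s : ℕ} (hn : 1 ≤ n)
    (h : n ^ r < (B + 1) ^ s) : (n * B + 1) ^ r < (B + 1) ^ (r + s) :=
  calc (n * B + 1) ^ r ≤ (n * (B + 1)) ^ r := Nat.pow_le_pow_left (by rw [mul_add_one]; omega) r
    _ = n ^ r * (B + 1) ^ r := mul_pow ..
    _ < (B + 1) ^ s * (B + 1) ^ r := Nat.mul_lt_mul_of_pos_right h (by positivity)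
    _ = (B + 1) ^ (r + s) := by rw [← pow_add, add_comm s]

theorem stmt_13 (r : ℕ) (s : ℕ) (hs : 1 ≤ s) (n : ℕ) (hn : 1 ≤ n)
    (A : Fin r → Fin (r + s) → ℕ)
    (hrow : ∀ i, (∑ j, A i j) ≤ n)
    (b : ℤ) (hb : b = ⌊(n : ℝ) ^ ((r : ℝ) / (s : ℝ))⌋) :
    ∃ x y : Fin (r + s) → ℕ, x ≠ y ∧
      (∀ j, (x j : ℤ) ≤ b) ∧ (∀ j, (y j : ℤ) ≤ b) ∧
      (∀ i, (∑ j, A i j * x j) = ∑ j, A i j * y j) ∧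
      ∃ v : Fin (r + s) → ℤ, v = (fun j => (x j : ℤ) - (y j : ℤ)) ∧ v ≠ 0 ∧
        (∀ i, (∑ j, (A i j : ℤ) * v j) = 0) ∧ ∀ j, |v j| ≤ b := by
  set B := ⌊(n : ℝ) ^ ((r : ℝ) / (s : ℝ))⌋₊
  have hBb : (B : ℤ) = b := hb ▸ Int.natCast_floor_eq_floor (by positivity)
  have hpow : n ^ r < (B + 1) ^ s := by
    exact_mod_cast pow_lt_floor_rpow_div_add_one_pow (Nat.cast_nonneg n) r (by omega)
  obtain ⟨x, y, hne, hx, hy, heq⟩ := exists_ne_forall_le_sum_mul_eq A hrow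
    (by simpa using mul_add_one_pow_lt_add_one_pow_add hn hpow)
  have hxb : ∀ j, (x j : ℤ) ≤ b := fun j => hBb ▸ Nat.cast_le.mpr (hx j)
  have hyb : ∀ j, (y j : ℤ) ≤ b := fun j => hBb ▸ Nat.cast_le.mpr (hy j)
  refine ⟨x, y, hne, hxb, hyb, heq, _, rfl, ?_, fun i => ?_, fun j => ?_⟩
  · intro h
    exact hne (funext fun j => by simpa [sub_eq_zero] using congrFun h j)
  · simp only [mul_sub, sum_sub_distrib, sub_eq_zero]
    exact_mod_cast heq i
  · have := hxb j; have := hyb j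
    rw [abs_le]; constructor <;> omega
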